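/- The Euler sum S_{1,3} := Σ_{n=1}^{∞} H_n / n^3 converges and equals (5/4)·ζ(4), where H_n = Σ_{k=1}^{n} 1/k is the n-th harmonic number and ζ is the Riemann zeta function. -/

import Mathlib

/-!
Write `ζ(s, t) = ∑_{m > n ≥ 1} m⁻ˢ n⁻ᵗ`. Expanding `ζ(2)² = ∑_{x, y ≥ 1} x⁻² y⁻²` in two ways gives
Euler's relation `ζ(3, 1) = ζ(4) / 4`: splitting the sum into `x < y`, `x = y`, `x > y` gives
`2 ζ(2, 2) + ζ(4)`, while the partial fraction expansion of
`x⁻² y⁻² = (x + y)⁻² (x⁻¹ + y⁻¹)²` gives `2 ζ(2, 2) + 4 ζ(3, 1)`.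
Grouping `ζ(3, 1)` by `m` gives `∑_m H_{m-1} / m³ = S_{1,3} - ζ(4)`.
-/

open Finset Real

section SumDecompositions

variable {α : Type*} [AddCommMonoid α] [TopologicalSpace α] [ContinuousAdd α]

theorem hasSum_prod_nat_of_lt_gt_diag {f : ℕ × ℕ → α} {a b c : α}
    (hlt : HasSum (fun p : ℕ × ℕ => f (p.1, p.1 + p.2 + 1)) a)
    (hgt : HasSum (fun p : ℕ × ℕ => f (p.1 + p.2 + 1, p.1)) b)
    (hdiag : HasSum (fun n : ℕ => f (n, n)) c) :
    HasSum f (a + b + c) := by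
  let g : (ℕ × ℕ ⊕ ℕ × ℕ) ⊕ ℕ → ℕ × ℕ
    | .inl (.inl p) => (p.1, p.1 + p.2 + 1)
    | .inl (.inr p) => (p.1 + p.2 + 1, p.1)
    | .inr n => (n, n)
  have hg : Function.Bijective g := by
    constructor
    · rintro ((⟨i, j⟩ | ⟨i, j⟩) | n) ((⟨k, l⟩ | ⟨k, l⟩) | m) h <;>
        simp only [g, Prod.mk.injEq] at h <;> grind
    · rintro ⟨i, j⟩
      rcases lt_trichotomy i j with h | rfl | h
      · exact ⟨.inl (.inl (i, j - i - 1)), by simp only [g]; grind⟩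
      · exact ⟨.inr i, rfl⟩
      · exact ⟨.inl (.inr (j, i - j - 1)), by simp only [g]; grind⟩
  exact (Equiv.ofBijective g hg).hasSum_iff.mp ((hlt.sum hgt).sum hdiag)

theorem HasSum.sum_antidiagonal [RegularSpace α] {f : ℕ × ℕ → α} {a : α} (h : HasSum f a) :
    HasSum (fun n => ∑ p ∈ antidiagonal n, f p) a :=
  (HasAntidiagonal.sigmaAntidiagonalEquivProd.hasSum_iff.mpr h).sigma fun n =>
    sum_coe_sort (antidiagonal n) f ▸ hasSum_fintype _

end SumDecompositions

theorem one_div_sq_mul_sq_eq {K : Type*} [Field K] {x y : K} (hx : x ≠ 0) (hy : y ≠ 0)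
    (hxy : x + y ≠ 0) :
    1 / (x ^ 2 * y ^ 2) = 1 / ((x + y) ^ 2 * x ^ 2) + 1 / ((x + y) ^ 2 * y ^ 2) +
      2 / ((x + y) ^ 3 * x) + 2 / ((x + y) ^ 3 * y) := by
  field_simp
  ring

theorem hasSum_one_div_nat_add_one_pow_four :
    HasSum (fun n : ℕ => 1 / ((n : ℝ) + 1) ^ 4) (π ^ 4 / 90) := by
  simpa using (hasSum_nat_add_iff' 1).mpr hasSum_zeta_four

theorem summable_one_div_nat_add_one_sq : Summable (fun n : ℕ => 1 / ((n : ℝ) + 1) ^ 2) := by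
  simpa using (summable_nat_add_iff 1).mpr hasSum_zeta_two.summable

namespace EulerSum

noncomputable def zetaTwoSqTerm (p : ℕ × ℕ) : ℝ := 1 / (((p.1 : ℝ) + 1) ^ 2 * ((p.2 : ℝ) + 1) ^ 2)

/-- The term `m⁻ˢ n⁻ᵗ` of `ζ(s, t)` at `n = a + 1`, `m = n + b + 1`. -/
noncomputable def doubleZetaTerm (s t : ℕ) (p : ℕ × ℕ) : ℝ :=
  1 / (((p.1 : ℝ) + p.2 + 2) ^ s * ((p.1 : ℝ) + 1) ^ t)

noncomputable def doubleZeta (s t : ℕ) : ℝ := ∑' p, doubleZetaTerm s t p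

theorem summable_zetaTwoSqTerm : Summable zetaTwoSqTerm := by
  have h := summable_one_div_nat_add_one_sq
  refine (h.mul_of_nonneg h (fun _ => by positivity) fun _ => by positivity).congr fun p => ?_
  simp only [zetaTwoSqTerm, one_div_mul_one_div]

theorem doubleZetaTerm_le_zetaTwoSqTerm {s t : ℕ} (hs : 2 ≤ s) (hst : 4 ≤ s + t) (p : ℕ × ℕ) :
    doubleZetaTerm s t p ≤ zetaTwoSqTerm p := by
  obtain ⟨a, b⟩ := p
  simp only [doubleZetaTerm, zetaTwoSqTerm]
  have hx : (1 : ℝ) ≤ a + 1 := by simp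
  have hy : (b : ℝ) + 1 ≤ a + b + 2 := by linarith [(a.cast_nonneg : (0 : ℝ) ≤ a)]
  have hxy : (a : ℝ) + 1 ≤ a + b + 2 := by linarith [(b.cast_nonneg : (0 : ℝ) ≤ b)]
  refine one_div_le_one_div_of_le (by positivity) ?_
  calc ((a : ℝ) + 1) ^ 2 * ((b : ℝ) + 1) ^ 2
      ≤ ((a : ℝ) + 1) ^ (s + t - 2) * ((a : ℝ) + b + 2) ^ 2 := by
        gcongr
        omega
    _ = ((a : ℝ) + 1) ^ (s - 2) * ((a : ℝ) + 1) ^ t * ((a : ℝ) + b + 2) ^ 2 := by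
        rw [← pow_add]; congr 3; omega
    _ ≤ ((a : ℝ) + b + 2) ^ (s - 2) * ((a : ℝ) + 1) ^ t * ((a : ℝ) + b + 2) ^ 2 := by
        gcongr
    _ = ((a : ℝ) + b + 2) ^ s * ((a : ℝ) + 1) ^ t := by
        rw [mul_right_comm, ← pow_add, Nat.sub_add_cancel hs]

theorem summable_doubleZetaTerm {s t : ℕ} (hs : 2 ≤ s) (hst : 4 ≤ s + t) :
    Summable (doubleZetaTerm s t) :=
  summable_zetaTwoSqTerm.of_nonneg_of_le (fun _ => by unfold doubleZetaTerm; positivity)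
    (doubleZetaTerm_le_zetaTwoSqTerm hs hst)

theorem hasSum_doubleZeta {s t : ℕ} (hs : 2 ≤ s) (hst : 4 ≤ s + t) :
    HasSum (doubleZetaTerm s t) (doubleZeta s t) :=
  (summable_doubleZetaTerm hs hst).hasSum

theorem hasSum_zetaTwoSqTerm_partialFractions :
    HasSum zetaTwoSqTerm (2 * doubleZeta 2 2 + 4 * doubleZeta 3 1) := by
  have h22 := hasSum_doubleZeta (s := 2) (t := 2) le_rfl le_rfl
  have h31 := hasSum_doubleZeta (s := 3) (t := 1) (by norm_num) le_rfl
  have hswap {s t : ℕ} (h : HasSum (doubleZetaTerm s t) (doubleZeta s t)) :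
      HasSum (fun p : ℕ × ℕ => doubleZetaTerm s t p.swap) (doubleZeta s t) :=
    (Equiv.prodComm ℕ ℕ).hasSum_iff.mpr h
  convert ((h22.add (hswap h22)).add ((h31.add (hswap h31)).mul_left 2)) using 1
  · ext ⟨a, b⟩
    simp only [zetaTwoSqTerm, doubleZetaTerm, Prod.swap]
    rw [one_div_sq_mul_sq_eq (x := (a : ℝ) + 1) (y := (b : ℝ) + 1) (by positivity) (by positivity)
      (by positivity)]
    ring
  · ring

theorem hasSum_zetaTwoSqTerm_triangles :
    HasSum zetaTwoSqTerm (2 * doubleZeta 2 2 + π ^ 4 / 90) := by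
  have h22 := hasSum_doubleZeta (s := 2) (t := 2) le_rfl le_rfl
  rw [two_mul]
  refine hasSum_prod_nat_of_lt_gt_diag (h22.congr_fun fun p => ?_) (h22.congr_fun fun p => ?_)
    (hasSum_one_div_nat_add_one_pow_four.congr_fun fun n => ?_)
  all_goals (simp only [zetaTwoSqTerm, doubleZetaTerm]; push_cast; ring)

theorem doubleZeta_three_one : doubleZeta 3 1 = π ^ 4 / 360 := by
  linarith [hasSum_zetaTwoSqTerm_partialFractions.unique hasSum_zetaTwoSqTerm_triangles]

theorem sum_antidiagonal_doubleZetaTerm_three_one (n : ℕ) :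
    ∑ p ∈ antidiagonal n, doubleZetaTerm 3 1 p = (harmonic (n + 1) : ℝ) / ((n : ℝ) + 2) ^ 3 := by
  calc ∑ p ∈ antidiagonal n, doubleZetaTerm 3 1 p
      = ∑ p ∈ antidiagonal n, 1 / ((p.1 : ℝ) + 1) / ((n : ℝ) + 2) ^ 3 := by
        refine sum_congr rfl fun p hp => ?_
        rw [← mem_antidiagonal.mp hp, doubleZetaTerm, Nat.cast_add, pow_one, mul_comm, ← div_div]
    _ = (harmonic (n + 1) : ℝ) / ((n : ℝ) + 2) ^ 3 := by
        rw [← sum_div, Nat.sum_antidiagonal_eq_sum_range_succ_mk, harmonic]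
        push_cast
        simp only [one_div]

theorem hasSum_harmonic_div_nat_add_one_pow_three :
    HasSum (fun n : ℕ => (harmonic n : ℝ) / ((n : ℝ) + 1) ^ 3) (π ^ 4 / 360) := by
  rw [← hasSum_nat_add_iff' 1, sum_range_one, harmonic_zero, Rat.cast_zero, zero_div, sub_zero]
  refine (doubleZeta_three_one ▸ hasSum_doubleZeta (s := 3) (t := 1) (by norm_num)
    le_rfl).sum_antidiagonal.congr_fun fun n => ?_
  rw [sum_antidiagonal_doubleZetaTerm_three_one]
  push_cast
  ring

theorem hasSum_harmonic_succ_div_nat_add_one_pow_three :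
    HasSum (fun n : ℕ => (harmonic (n + 1) : ℝ) / ((n : ℝ) + 1) ^ 3) (π ^ 4 / 72) := by
  convert hasSum_harmonic_div_nat_add_one_pow_three.add hasSum_one_div_nat_add_one_pow_four
    using 1
  · ext n
    rw [harmonic_succ]
    push_cast
    field_simp
  · ring

end EulerSum

/-- The Euler sum `S_{1,3} = Σ_{n≥1} H_n/n³` converges and equals
`(5/4)ζ(4)`, where `H_n` is the `n`-th harmonic number and `ζ` the Riemann zeta
function. -/
theorem euler_sum_one_three :
    HasSum (fun n : ℕ => ((harmonic (n + 1) : ℝ) : ℂ) / ((n : ℂ) + 1) ^ 3)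
      ((5 / 4) * riemannZeta 4) := by
  rw [riemannZeta_four]
  convert Complex.hasSum_ofReal.mpr
    EulerSum.hasSum_harmonic_succ_div_nat_add_one_pow_three using 1
  · push_cast
    rfl
  · push_cast
    ring
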